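/- Define γ : sl_n(ℂ) → (sl_n(ℂ))^∨ (real dual) by γ(g)(h) = i·tr(q(g)·p(h)), where p(h) = (h − h*)/2 and q(g) = (g + g*)/2. Then the Chevalley–Eilenberg coboundary of γ, with sl_n(ℂ) acting on its real dual by (x·θ)(y) = −θ([x,y]), satisfies (dγ)(x₁,x₂)(x₃) = 2i·tr(q(x₁)[q(x₂),q(x₃)]) for all x₁, x₂, x₃ ∈ sl_n(ℂ). -/

import Mathlib

/-!
The map `A ↦ -Aᴴ` is an involutive Lie algebra automorphism whose `±1`-eigenspaces are the
skew-Hermitian and the Hermitian matrices, so `p⁅a, b⁆ = ⁅p a, p b⁆ + ⁅q a, q b⁆` and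
`q⁅a, b⁆ = ⁅p a, q b⁆ + ⁅q a, p b⁆`. Substituting these, every term of `dγ` becomes
`i·tr(A⁅B, C⁆)` with `A, B, C` among the `p xᵢ, q xᵢ`, and this trilinear form is alternating.
The terms containing some `p xᵢ` cancel in pairs, and the two purely Hermitian terms agree.
-/

open Matrix Complex

/-- The skew-Hermitian projection `p(A) = (A - Aᴴ)/2`. -/
noncomputable def pSkew (n : ℕ) (A : Matrix (Fin n) (Fin n) ℂ) : Matrix (Fin n) (Fin n) ℂ :=
  ((1 : ℂ) / 2) • (A - Aᴴ)

/-- The Hermitian projection `q(A) = (A + Aᴴ)/2`. -/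
noncomputable def qHerm (n : ℕ) (A : Matrix (Fin n) (Fin n) ℂ) : Matrix (Fin n) (Fin n) ℂ :=
  ((1 : ℂ) / 2) • (A + Aᴴ)

/-- The cochain `γ(g)(h) = i·tr(q(g)·p(h))`. -/
noncomputable def gammaCochain (n : ℕ) (g h : Matrix (Fin n) (Fin n) ℂ) : ℂ :=
  Complex.I * (qHerm n g * pSkew n h).trace

theorem Matrix.trace_mul_lie_cycle {m R : Type*} [Fintype m] [DecidableEq m] [CommRing R]
    (A B C : Matrix m m R) : trace (A * ⁅B, C⁆) = trace (B * ⁅C, A⁆) := by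
  simp only [Ring.lie_def, Matrix.mul_sub, trace_sub]
  rw [trace_mul_cycle' B C A, trace_mul_cycle' A C B]

theorem Matrix.trace_mul_lie_swap {m R : Type*} [Fintype m] [DecidableEq m] [CommRing R]
    (A B C : Matrix m m R) : trace (A * ⁅B, C⁆) = -trace (A * ⁅C, B⁆) := by
  simp only [Ring.lie_def, Matrix.mul_sub, trace_sub, neg_sub]

section Projections

variable {n : ℕ}

theorem pSkew_lie (a b : Matrix (Fin n) (Fin n) ℂ) :
    pSkew n ⁅a, b⁆ = ⁅pSkew n a, pSkew n b⁆ + ⁅qHerm n a, qHerm n b⁆ := by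
  simp only [pSkew, qHerm, Ring.lie_def, conjTranspose_sub, conjTranspose_mul, smul_mul_smul,
    Matrix.mul_sub, Matrix.sub_mul, Matrix.mul_add, Matrix.add_mul]
  module

theorem qHerm_lie (a b : Matrix (Fin n) (Fin n) ℂ) :
    qHerm n ⁅a, b⁆ = ⁅pSkew n a, qHerm n b⁆ + ⁅qHerm n a, pSkew n b⁆ := by
  simp only [pSkew, qHerm, Ring.lie_def, conjTranspose_sub, conjTranspose_mul, smul_mul_smul,
    Matrix.mul_sub, Matrix.sub_mul, Matrix.mul_add, Matrix.add_mul]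
  module

theorem gammaCochain_lie_right (g a b : Matrix (Fin n) (Fin n) ℂ) :
    gammaCochain n g ⁅a, b⁆ = I * (trace (qHerm n g * ⁅pSkew n a, pSkew n b⁆) +
      trace (qHerm n g * ⁅qHerm n a, qHerm n b⁆)) := by
  rw [gammaCochain, pSkew_lie, Matrix.mul_add, trace_add]

theorem gammaCochain_lie_left (a b h : Matrix (Fin n) (Fin n) ℂ) :
    gammaCochain n ⁅a, b⁆ h = I * (trace (pSkew n h * ⁅pSkew n a, qHerm n b⁆) +
      trace (pSkew n h * ⁅qHerm n a, pSkew n b⁆)) := by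
  rw [gammaCochain, qHerm_lie, Matrix.add_mul, trace_add, trace_mul_comm _ (pSkew n h),
    trace_mul_comm _ (pSkew n h)]

end Projections

theorem d_gamma_eq_general (n : ℕ) (x₁ x₂ x₃ : Matrix (Fin n) (Fin n) ℂ) :
    -gammaCochain n x₂ (x₁ * x₃ - x₃ * x₁) + gammaCochain n x₁ (x₂ * x₃ - x₃ * x₂) -
        gammaCochain n (x₁ * x₂ - x₂ * x₁) x₃ =
      2 * Complex.I *
        (qHerm n x₁ * (qHerm n x₂ * qHerm n x₃ - qHerm n x₃ * qHerm n x₂)).trace := by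
  simp only [← Ring.lie_def, gammaCochain_lie_left, gammaCochain_lie_right]
  set p₁ := pSkew n x₁
  set p₂ := pSkew n x₂
  set p₃ := pSkew n x₃
  set q₁ := qHerm n x₁
  set q₂ := qHerm n x₂
  set q₃ := qHerm n x₃
  have hp₁ : trace (p₃ * ⁅p₁, q₂⁆) = -trace (q₂ * ⁅p₁, p₃⁆) := by
    rw [trace_mul_lie_cycle p₃, trace_mul_lie_cycle p₁, trace_mul_lie_swap]
  have hp₂ : trace (p₃ * ⁅q₁, p₂⁆) = trace (q₁ * ⁅p₂, p₃⁆) := trace_mul_lie_cycle _ _ _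
  have hq : trace (q₂ * ⁅q₁, q₃⁆) = -trace (q₁ * ⁅q₂, q₃⁆) := by
    rw [trace_mul_lie_cycle q₂, trace_mul_lie_swap]
  rw [hp₁, hp₂, hq]
  ring

/-- The Chevalley–Eilenberg coboundary of `γ` is the 3-form
`(x₁,x₂) ↦ (x₃ ↦ 2i·tr(q(x₁)[q(x₂),q(x₃)]))`. -/
theorem d_gamma_eq (n : ℕ) (x₁ x₂ x₃ : Matrix (Fin n) (Fin n) ℂ)
    (h₁ : x₁.trace = 0) (h₂ : x₂.trace = 0) (h₃ : x₃.trace = 0) :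
    -gammaCochain n x₂ (x₁ * x₃ - x₃ * x₁) + gammaCochain n x₁ (x₂ * x₃ - x₃ * x₂) -
        gammaCochain n (x₁ * x₂ - x₂ * x₁) x₃ =
      2 * Complex.I *
        (qHerm n x₁ * (qHerm n x₂ * qHerm n x₃ - qHerm n x₃ * qHerm n x₂)).trace :=
  d_gamma_eq_general n x₁ x₂ x₃
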